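/- arXiv:math/0507281 — 3 statements merged into one kernel-verified Lean document; each statement's English description precedes it below -/
import Mathlib

section
/- Let n ≥ 2 be an integer and let r_1, …, r_{2n+1} be real numbers with 0 < r_i < π for all i. Then (2^{2n}/π)·Σ_{k=1}^∞ (sin(k r_1)⋯sin(k r_{2n+1}))/k^{2n−1} = ((2π)^{2n−2}/(2n−1)!)·Σ_{I ⊆ {1,…,2n+1}, |I| odd} B_{2n−1}({(r_I − r_{Ī})/(2π)}). -/
open Real Finset

/-!
Writing `2i sin θ = e^{iθ} - e^{-iθ}` and expanding, a product of `2n + 1` sines becomes a sum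
over subsets in which complementary subsets pair up into sines, giving
`(-4)^n ∏ sin θ_i = ∑_{|I| odd} sin (θ_I - θ_Ī)`. Applied to `θ_i = k r_i`, this turns the series
into a combination of the series `∑ sin (k c) / k^(2n-1)`, which are the Fourier expansions of
the odd Bernoulli polynomials evaluated at `{c / 2π}`.
-/

theorem Finset.sum_eq_sum_filter_odd_card_add_compl {ι M : Type*} [Fintype ι] [DecidableEq ι]
    [AddCommMonoid M] (hι : Odd (Fintype.card ι)) (f : Finset ι → M) :
    ∑ t, f t = ∑ t ∈ univ.filter (fun t : Finset ι => Odd #t), (f t + f tᶜ) := by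
  have parity_compl : ∀ t : Finset ι, (Odd #tᶜ ↔ Even #t) ∧ (Even #tᶜ ↔ Odd #t) := by
    intro t
    have := card_add_card_compl t
    grind
  rw [sum_add_distrib, ← sum_filter_add_sum_filter_not univ (fun t : Finset ι => Odd #t)]
  congr 1
  exact sum_nbij' compl compl (by simp [parity_compl]) (by simp [parity_compl])
    (fun t _ => compl_compl t) (fun t _ => compl_compl t) (fun t _ => by rw [compl_compl])

theorem Complex.two_mul_I_mul_sin (z : ℂ) :
    2 * I * sin z = exp (z * I) - exp (-z * I) := by
  linear_combination I * two_sin z + (exp (-z * I) - exp (z * I)) * I_sq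

theorem Complex.neg_four_pow_mul_prod_sin {ι : Type*} [Fintype ι] [DecidableEq ι] {n : ℕ}
    (hι : Fintype.card ι = 2 * n + 1) (θ : ι → ℂ) :
    (-4) ^ n * ∏ i, sin (θ i) =
      ∑ t ∈ univ.filter (fun t : Finset ι => Odd #t), sin (∑ i ∈ t, θ i - ∑ i ∈ tᶜ, θ i) := by
  set s : Finset ι → ℂ := fun t => ∑ i ∈ t, θ i - ∑ i ∈ tᶜ, θ i with hs
  have expand : (2 * I) ^ (2 * n + 1) * ∏ i, sin (θ i) = ∑ t, (-1) ^ #t * exp (-s t * I) := by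
    rw [← hι, ← card_univ, ← prod_const, ← prod_mul_distrib]
    simp_rw [two_mul_I_mul_sin, prod_sub, powerset_univ]
    refine sum_congr rfl fun t _ => ?_
    rw [mul_assoc, ← exp_sum, ← exp_sum, ← exp_add, ← compl_eq_univ_sdiff, hs]
    simp only [neg_mul, sum_neg_distrib, ← sum_mul]
    ring_nf
  have pair : ∀ t : Finset ι, Odd #t →
      (-1) ^ #t * exp (-s t * I) + (-1) ^ #tᶜ * exp (-s tᶜ * I) = 2 * I * sin (s t) := by
    intro t ht
    have even_compl : Even #tᶜ := by
      have := card_add_card_compl t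
      grind
    have s_compl : s tᶜ = -s t := by simp only [hs, compl_compl]; ring
    rw [ht.neg_one_pow, even_compl.neg_one_pow, s_compl, two_mul_I_mul_sin]
    ring_nf
  have two_I_pow : (2 * I) ^ (2 * n + 1) = 2 * I * (-4) ^ n := by
    rw [pow_succ, pow_mul, mul_pow, I_sq]
    ring
  have two_I_ne_zero : (2 * I) ≠ 0 := by simp
  apply mul_left_cancel₀ two_I_ne_zero
  rw [← mul_assoc, ← two_I_pow, expand, sum_eq_sum_filter_odd_card_add_compl (by simp [hι]),
    mul_sum]
  exact sum_congr rfl fun t ht => pair t (mem_filter.mp ht).2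

theorem Real.neg_four_pow_mul_prod_sin {ι : Type*} [Fintype ι] [DecidableEq ι] {n : ℕ}
    (hι : Fintype.card ι = 2 * n + 1) (θ : ι → ℝ) :
    (-4) ^ n * ∏ i, sin (θ i) =
      ∑ t ∈ univ.filter (fun t : Finset ι => Odd #t), sin (∑ i ∈ t, θ i - ∑ i ∈ tᶜ, θ i) := by
  exact_mod_cast Complex.neg_four_pow_mul_prod_sin hι (fun i => (θ i : ℂ))

theorem Real.sin_two_pi_mul_nat_mul_fract (m : ℕ) (c : ℝ) :
    sin (2 * π * m * Int.fract (c / (2 * π))) = sin (m * c) := by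
  have h : 2 * π * m * Int.fract (c / (2 * π)) = m * c - (m * ⌊c / (2 * π)⌋ : ℤ) * (2 * π) := by
    rw [Int.fract]
    push_cast
    field_simp
  rw [h, sin_sub_int_mul_two_pi]

theorem Real.hasSum_sin_nat_succ_mul_div_pow {K : ℕ} (hK : K ≠ 0) (c : ℝ) :
    HasSum (fun k : ℕ => sin ((k + 1) * c) / ((k : ℝ) + 1) ^ (2 * K + 1))
      ((-1) ^ (K + 1) * (2 * π) ^ (2 * K + 1) / 2 / (2 * K + 1).factorial *
        Polynomial.aeval (Int.fract (c / (2 * π))) (Polynomial.bernoulli (2 * K + 1))) := by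
  have fract_mem : Int.fract (c / (2 * π)) ∈ Set.Icc (0 : ℝ) 1 :=
    ⟨Int.fract_nonneg _, (Int.fract_lt_one _).le⟩
  have h := (hasSum_nat_add_iff' 1).mpr (hasSum_one_div_nat_pow_mul_sin hK fract_mem)
  simp only [range_one, sum_singleton, Nat.cast_zero, mul_zero, zero_mul, sin_zero, sub_zero,
    sin_two_pi_mul_nat_mul_fract] at h
  rw [Polynomial.aeval_def, ← Polynomial.eval_map]
  refine h.congr_fun fun k => ?_
  push_cast
  ring

theorem volume_odd_bernoulli_general (n : ℕ) (hn : 2 ≤ n) (r : Fin (2 * n + 1) → ℝ) :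
    (2 ^ (2 * n) / π) *
      ∑' k : ℕ, (∏ i, Real.sin (((k : ℝ) + 1) * r i)) / ((k : ℝ) + 1) ^ (2 * n - 1) =
    ((2 * π) ^ (2 * n - 2) / (Nat.factorial (2 * n - 1) : ℝ)) *
      ∑ I ∈ Finset.univ.filter (fun I : Finset (Fin (2 * n + 1)) => Odd I.card),
        Polynomial.aeval (Int.fract ((∑ i ∈ I, r i - ∑ i ∈ Iᶜ, r i) / (2 * π)))
          (Polynomial.bernoulli (2 * n - 1)) := by
  obtain ⟨K, rfl⟩ : ∃ K, n = K + 1 := ⟨n - 1, by omega⟩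
  rw [show 2 * (K + 1) - 1 = 2 * K + 1 by omega, show 2 * (K + 1) - 2 = 2 * K by omega]
  set c : Finset (Fin (2 * (K + 1) + 1)) → ℝ := fun I => ∑ i ∈ I, r i - ∑ i ∈ Iᶜ, r i
  set b : ℝ → ℝ := fun x => Polynomial.aeval (Int.fract (x / (2 * π)))
    (Polynomial.bernoulli (2 * K + 1))
  set A : ℝ := (-1) ^ (K + 1) * (2 * π) ^ (2 * K + 1) / 2 / (2 * K + 1).factorial
  have series : HasSum (fun k : ℕ => (∏ i, sin ((k + 1) * r i)) / ((k : ℝ) + 1) ^ (2 * K + 1))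
      (((-4) ^ (K + 1))⁻¹ * ∑ I ∈ univ.filter (fun I => Odd #I), A * b (c I)) := by
    refine ((hasSum_sum fun I _ => hasSum_sin_nat_succ_mul_div_pow (by omega) (c I)).mul_left
      _).congr_fun fun k => ?_
    have h := Real.neg_four_pow_mul_prod_sin (n := K + 1) (by simp) (fun i => ((k : ℝ) + 1) * r i)
    simp only [← mul_sum, ← mul_sub] at h
    rw [← sum_div, ← h]
    field_simp
  rw [series.tsum_eq, ← mul_sum, ← mul_assoc, ← mul_assoc]
  congr 1
  have neg_four_pow : (-4 : ℝ) ^ (K + 1) = (-1) ^ (K + 1) * 2 ^ (2 * (K + 1)) := by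
    rw [pow_mul, ← mul_pow]
    norm_num
  simp only [A, neg_four_pow]
  field_simp
  ring

theorem volume_odd_bernoulli (n : ℕ) (hn : 2 ≤ n) (r : Fin (2 * n + 1) → ℝ)
    (hr : ∀ i, 0 < r i ∧ r i < π) :
    (2 ^ (2 * n) / π) *
      ∑' k : ℕ, (∏ i, Real.sin (((k : ℝ) + 1) * r i)) / ((k : ℝ) + 1) ^ (2 * n - 1) =
    ((2 * π) ^ (2 * n - 2) / (Nat.factorial (2 * n - 1) : ℝ)) *
      ∑ I ∈ Finset.univ.filter (fun I : Finset (Fin (2 * n + 1)) => Odd I.card),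
        Polynomial.aeval (Int.fract ((∑ i ∈ I, r i - ∑ i ∈ Iᶜ, r i) / (2 * π)))
          (Polynomial.bernoulli (2 * n - 1)) :=
  volume_odd_bernoulli_general n hn r
end

section
/- Let n ≥ 2 be an integer. There exists ε > 0 such that for all real numbers r_1, …, r_{2n} with 0 < r_i < ε for all i, one has (2^{2n−1}/π)·Σ_{k=1}^∞ (sin(k r_1)⋯sin(k r_{2n}))/k^{2n−2} = −(1/(4·(2n−3)!))·Σ_{I ⊆ {1,…,2n}} (−1)^{|I|} |r_I − r_{Ī}|^{2n−3}. -/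
/-!
Writing `sin t = (e^{-it} - e^{it}) · i/2` and expanding the product, for an even number `2n` of
factors `(-4)^n ∏ sin (k r_i) = ∑_I (-1)^|I| cos (k (r_I - r_Ī))`. For small sides every
`|r_I - r_Ī|` is at most `2π`, so the Fourier series `∑_k cos (kθ) / k^(2p) = c_p B_{2p}(|θ|/2π)`
turns the volume into an alternating sum of Bernoulli polynomials. Now `B_{2p}(|y|) + p |y|^(2p-1)`
is a polynomial in `y` of degree `2p < 2n`, and `∑_I (-1)^|I| P(r_I - r_Ī) = 0` for every polynomial
`P` of degree `< 2n`: with `P = X^e` it is `e!` times a coefficient of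
`∏_i (e^{-r_i X} - e^{r_i X}) = O(X^{2n})`. Only the term `-p |y|^(2p-1)` survives.
-/

open Real Finset

lemma AddChar.map_sum_eq_prod {ι M R : Type*} [AddCommMonoid M] [CommMonoid R]
    (ψ : AddChar M R) (s : Finset ι) (x : ι → M) : ψ (∑ i ∈ s, x i) = ∏ i ∈ s, ψ (x i) := by
  induction s using Finset.cons_induction with
  | empty => simp
  | cons a s ha ih => rw [sum_cons, prod_cons, ψ.map_add_eq_mul, ih]

namespace Polynomial

theorem natDegree_bernoulli_le (n : ℕ) : (bernoulli n).natDegree ≤ n :=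
  natDegree_le_iff_coeff_eq_zero.mpr fun i hi => by
    rw [coeff_bernoulli, if_neg (by exact_mod_cast hi.not_ge)]

theorem bernoulli_map_eval_neg (n : ℕ) (y : ℝ) :
    ((bernoulli n).map (algebraMap ℚ ℝ)).eval (-y) =
      (-1) ^ n * (((bernoulli n).map (algebraMap ℚ ℝ)).eval y + n * y ^ (n - 1)) := by
  simpa [Polynomial.map_comp, mul_add] using
    congrArg (fun P => (P.map (algebraMap ℚ ℝ)).eval y) (bernoulli_comp_neg_X n)

theorem bernoulli_map_eval_abs_add {p : ℕ} (hp : p ≠ 0) (y : ℝ) :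
    ((bernoulli (2 * p)).map (algebraMap ℚ ℝ)).eval |y| + p * |y| ^ (2 * p - 1) =
      ((bernoulli (2 * p)).map (algebraMap ℚ ℝ)).eval y + p * y ^ (2 * p - 1) := by
  rcases abs_choice y with hy | hy
  · rw [hy]
  · have hodd : Odd (2 * p - 1) := Nat.Even.sub_odd (by omega) (even_two_mul p) odd_one
    rw [hy, bernoulli_map_eval_neg, (even_two_mul p).neg_one_pow, hodd.neg_pow]
    push_cast
    ring

end Polynomial

section SignedSum

variable {ι : Type*} [Fintype ι] [DecidableEq ι]

def signedSum {M : Type*} [AddCommGroup M] (T : Finset ι) (x : ι → M) : M :=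
  ∑ i ∈ T, x i - ∑ i ∈ Tᶜ, x i

theorem signedSum_mul {R : Type*} [Ring R] (T : Finset ι) (c : R) (x : ι → R) :
    signedSum T (fun i => c * x i) = c * signedSum T x := by
  simp only [signedSum, ← mul_sum, mul_sub]

theorem signedSum_div {K : Type*} [DivisionRing K] (T : Finset ι) (x : ι → K) (c : K) :
    signedSum T (fun i => x i / c) = signedSum T x / c := by
  simp only [signedSum, ← sum_div, sub_div]

theorem abs_signedSum_le {α : Type*} [AddCommGroup α] [LinearOrder α] [IsOrderedAddMonoid α]
    (T : Finset ι) (x : ι → α) : |signedSum T x| ≤ ∑ i, |x i| :=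
  calc |signedSum T x| ≤ |∑ i ∈ T, x i| + |∑ i ∈ Tᶜ, x i| := abs_sub _ _
    _ ≤ ∑ i ∈ T, |x i| + ∑ i ∈ Tᶜ, |x i| :=
      add_le_add (abs_sum_le_sum_abs _ _) (abs_sum_le_sum_abs _ _)
    _ = ∑ i, |x i| := sum_add_sum_compl T _

theorem AddChar.prod_map_neg_sub_map {M R : Type*} [AddCommGroup M] [CommRing R]
    (ψ : AddChar M R) (x : ι → M) :
    ∏ i, (ψ (-x i) - ψ (x i)) = ∑ T : Finset ι, (-1) ^ #T * ψ (signedSum T x) := by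
  simp_rw [sub_eq_neg_add, Fintype.prod_add, prod_neg, signedSum, sub_eq_add_neg,
    ψ.map_add_eq_mul, ← sum_neg_distrib, ψ.map_sum_eq_prod, mul_assoc]

open PowerSeries in
theorem sum_neg_one_pow_card_mul_signedSum_pow_eq_zero {R : Type*} [CommRing R] [Algebra ℚ R]
    (x : ι → R) {e : ℕ} (he : e < Fintype.card ι) :
    ∑ T : Finset ι, (-1) ^ #T * signedSum T x ^ e = 0 := by
  let ψ : AddChar R R⟦X⟧ :=
    { toFun a := rescale a (exp R)
      map_zero_eq_one' := by simp [rescale_zero]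
      map_add_eq_mul' a b := (exp_mul_exp_eq_exp_add a b).symm }
  have hdvd : X ^ Fintype.card ι ∣ ∏ i, (ψ (-x i) - ψ (x i)) := by
    rw [← card_univ, ← prod_const]
    refine prod_dvd_prod_of_dvd _ _ fun i _ => X_dvd_iff.mpr ?_
    simp only [ψ, AddChar.coe_mk, ← coeff_zero_eq_constantCoeff_apply, map_sub, coeff_rescale,
      pow_zero, one_mul, sub_self]
  rw [ψ.prod_map_neg_sub_map, X_pow_dvd_iff] at hdvd
  have hcoeff := hdvd e he
  have hsign : ∀ k : ℕ, (-1 : R⟦X⟧) ^ k = C ((-1 : R) ^ k) := by simp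
  simp only [map_sum, ψ, AddChar.coe_mk, hsign, coeff_C_mul, coeff_rescale, coeff_exp,
    ← mul_assoc, ← sum_mul] at hcoeff
  have hunit : IsUnit (algebraMap ℚ R (1 / e.factorial)) := (IsUnit.mk0 _ (by positivity)).map _
  exact hunit.mul_left_eq_zero.mp hcoeff

open Polynomial in
theorem sum_neg_one_pow_card_mul_eval_signedSum_eq_zero {R : Type*} [CommRing R] [Algebra ℚ R]
    (x : ι → R) {P : R[X]} (hP : P.natDegree < Fintype.card ι) :
    ∑ T : Finset ι, (-1) ^ #T * P.eval (signedSum T x) = 0 := by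
  simp_rw [eval_eq_sum_range, mul_sum]
  rw [sum_comm]
  refine sum_eq_zero fun i hi => ?_
  simp_rw [mul_left_comm _ (P.coeff i), ← mul_sum]
  rw [sum_neg_one_pow_card_mul_signedSum_pow_eq_zero x (by grind), mul_zero]

theorem neg_four_pow_mul_prod_sin {n : ℕ} (hι : Fintype.card ι = 2 * n) (x : ι → ℝ) :
    (-4) ^ n * ∏ i, sin (x i) = ∑ T : Finset ι, (-1) ^ #T * cos (signedSum T x) := by
  let ψ : AddChar ℂ ℂ :=
    { toFun z := Complex.exp (z * Complex.I)
      map_zero_eq_one' := by simp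
      map_add_eq_mul' a b := by rw [add_mul, Complex.exp_add] }
  have key := congrArg Complex.re (ψ.prod_map_neg_sub_map (fun i => (x i : ℂ)))
  have hsin : ∀ z : ℂ, ψ (-z) - ψ z = -2 * Complex.I * Complex.sin z := by
    intro z
    simp only [ψ, AddChar.coe_mk, Complex.sin]
    ring_nf
    simp [Complex.I_sq]
    ring
  have hreal : ∀ T : Finset ι, signedSum T (fun i => (x i : ℂ)) = (signedSum T x : ℝ) := by
    simp [signedSum]
  have hpow : (-2 * Complex.I) ^ (2 * n) = (-4) ^ n := by
    rw [pow_mul, mul_pow, Complex.I_sq]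
    norm_num
  have hre : ∀ T : Finset ι,
      ((-1) ^ #T * ψ (signedSum T x : ℝ)).re = (-1) ^ #T * cos (signedSum T x) := by
    intro T
    rw [← Complex.ofReal_one, ← Complex.ofReal_neg, ← Complex.ofReal_pow, Complex.re_ofReal_mul]
    simp [ψ]
  simp_rw [hsin, hreal] at key
  rw [prod_mul_distrib, prod_const, card_univ, hι, hpow, Complex.re_sum] at key
  simp only [hre] at key
  rw [← key]
  norm_cast

open Polynomial in
theorem sum_neg_one_pow_card_mul_bernoulli_eval {p : ℕ} (hp : p ≠ 0)
    (hcard : 2 * p < Fintype.card ι) (x : ι → ℝ) {c : ℝ} (hc : 0 ≤ c) :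
    ∑ T : Finset ι, (-1) ^ #T *
        ((Polynomial.bernoulli (2 * p)).map (algebraMap ℚ ℝ)).eval (|signedSum T x| / c) =
      -p / c ^ (2 * p - 1) * ∑ T : Finset ι, (-1) ^ #T * |signedSum T x| ^ (2 * p - 1) := by
  set Q : ℝ[X] := (Polynomial.bernoulli (2 * p)).map (algebraMap ℚ ℝ) + C (p : ℝ) * X ^ (2 * p - 1)
  have hQ : Q.natDegree < Fintype.card ι := by
    refine lt_of_le_of_lt (natDegree_add_le_of_degree_le ?_ ?_) hcard
    · exact natDegree_map_le.trans (natDegree_bernoulli_le _)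
    · exact (natDegree_C_mul_le _ _).trans (by rw [natDegree_X_pow]; omega)
  have hB : ∀ T : Finset ι,
      ((Polynomial.bernoulli (2 * p)).map (algebraMap ℚ ℝ)).eval (|signedSum T x| / c) =
        Q.eval (signedSum T (fun i => x i / c)) -
          p / c ^ (2 * p - 1) * |signedSum T x| ^ (2 * p - 1) := by
    intro T
    have h := bernoulli_map_eval_abs_add hp (signedSum T x / c)
    rw [abs_div, abs_of_nonneg hc] at h
    simp only [Q, signedSum_div, eval_add, eval_mul, eval_C, eval_pow, eval_X]
    linear_combination h
  simp_rw [hB, mul_sub, sum_sub_distrib, sum_neg_one_pow_card_mul_eval_signedSum_eq_zero _ hQ,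
    mul_left_comm _ (p / c ^ (2 * p - 1) : ℝ), ← mul_sum]
  ring

theorem hasSum_cos_succ_mul_div_pow {p : ℕ} (hp : p ≠ 0) {θ : ℝ} (hθ : |θ| ≤ 2 * π) :
    HasSum (fun k : ℕ => cos ((k + 1) * θ) / ((k : ℝ) + 1) ^ (2 * p))
      ((-1) ^ (p + 1) * (2 * π) ^ (2 * p) / 2 / (2 * p).factorial *
        ((Polynomial.bernoulli (2 * p)).map (algebraMap ℚ ℝ)).eval (|θ| / (2 * π))) := by
  have hx : |θ| / (2 * π) ∈ Set.Icc (0 : ℝ) 1 :=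
    ⟨by positivity, (div_le_one (by positivity)).mpr hθ⟩
  have h := (hasSum_nat_add_iff' 1).mpr (hasSum_one_div_nat_pow_mul_cos hp hx)
  simp only [range_one, sum_singleton, Nat.cast_zero, zero_pow (by omega : 2 * p ≠ 0), div_zero,
    zero_mul, sub_zero] at h
  refine h.congr_fun fun k => ?_
  push_cast
  have hk : 2 * π * ((k : ℝ) + 1) * |θ| / (2 * π) = |((k : ℝ) + 1) * θ| := by
    rw [abs_mul, abs_of_pos (by positivity : (0 : ℝ) < k + 1)]
    field_simp
  rw [mul_div_assoc', hk, cos_abs, one_div_mul_eq_div]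

theorem hasSum_prod_sin_div_pow {n p : ℕ} (hι : Fintype.card ι = 2 * n) (hp : p ≠ 0)
    (x : ι → ℝ) (hx : ∀ T : Finset ι, |signedSum T x| ≤ 2 * π) :
    HasSum (fun k : ℕ => (∏ i, sin ((k + 1) * x i)) / ((k : ℝ) + 1) ^ (2 * p))
      (((-4) ^ n)⁻¹ * ((-1) ^ (p + 1) * (2 * π) ^ (2 * p) / 2 / (2 * p).factorial) *
        ∑ T : Finset ι, (-1) ^ #T *
          ((Polynomial.bernoulli (2 * p)).map (algebraMap ℚ ℝ)).eval (|signedSum T x| / (2 * π))) := by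
  have h := (hasSum_sum (s := univ) fun T _ =>
    (hasSum_cos_succ_mul_div_pow hp (hx T)).mul_left ((-1) ^ #T)).mul_left ((-4 : ℝ) ^ n)⁻¹
  simp_rw [mul_left_comm ((-1 : ℝ) ^ #_) ((-1 : ℝ) ^ (p + 1) * _ / _ / _), ← mul_sum,
    ← mul_assoc] at h
  refine h.congr_fun fun k => ?_
  rw [eq_inv_mul_iff_mul_eq₀ (by positivity), ← mul_div_assoc, neg_four_pow_mul_prod_sin hι,
    sum_div]
  simp_rw [signedSum_mul, mul_div_assoc]

end SignedSum

theorem euclidean_volume_even (n : ℕ) (hn : 2 ≤ n) :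
    ∃ ε > 0, ∀ r : Fin (2 * n) → ℝ, (∀ i, 0 < r i ∧ r i < ε) →
      (2 ^ (2 * n - 1) / π) *
        ∑' k : ℕ, (∏ i, Real.sin (((k : ℝ) + 1) * r i)) / ((k : ℝ) + 1) ^ (2 * n - 2) =
      -(1 / (4 * (Nat.factorial (2 * n - 3) : ℝ))) *
        ∑ I : Finset (Fin (2 * n)), (-1 : ℝ) ^ I.card *
          |∑ i ∈ I, r i - ∑ i ∈ Iᶜ, r i| ^ (2 * n - 3) := by
  obtain ⟨p, rfl⟩ : ∃ p, n = p + 1 := ⟨n - 1, by omega⟩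
  have hp : p ≠ 0 := by omega
  refine ⟨π / (p + 1), by positivity, fun r hr => ?_⟩
  have hθ : ∀ T : Finset (Fin (2 * (p + 1))), |signedSum T r| ≤ 2 * π := fun T =>
    calc |signedSum T r| ≤ ∑ i, |r i| := abs_signedSum_le T r
      _ ≤ ∑ _i : Fin (2 * (p + 1)), π / (p + 1) :=
        sum_le_sum fun i _ => (abs_of_pos (hr i).1).trans_le (hr i).2.le
      _ = 2 * π := by simp; field_simp
  rw [show 2 * (p + 1) - 2 = 2 * p by omega,
    (hasSum_prod_sin_div_pow (Fintype.card_fin _) hp r hθ).tsum_eq,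
    sum_neg_one_pow_card_mul_bernoulli_eval hp (by rw [Fintype.card_fin]; omega) r (by positivity),
    show 2 * (p + 1) - 3 = 2 * p - 1 by omega, show 2 * (p + 1) - 1 = 2 * p + 1 by omega,
    ← Nat.mul_factorial_pred (show 2 * p ≠ 0 by omega),
    ← pow_sub_one_mul (show 2 * p ≠ 0 by omega) (2 * π),
    show (-4 : ℝ) ^ (p + 1) = (-1) ^ (p + 1) * 2 ^ (2 * p + 1) * 2 by
      rw [show (-4 : ℝ) = -1 * 2 ^ 2 by norm_num, mul_pow, ← pow_mul]; ring]
  push_cast [Nat.cast_sub (show 1 ≤ 2 * p by omega), signedSum]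
  field_simp
  ring
end

section
/- Let n ≥ 4 be an integer and let x_1, …, x_n be real numbers with 0 < x_i < π for all i. Then Σ_{k=1}^∞ sin(k x_1)·sin(k x_2)·(∏_{i=3}^n sin(k x_i))/k^{n−2} ≤ Σ_{k=1}^∞ (sin(k(x_1+x_2)/2))^2·(∏_{i=3}^n sin(k x_i))/k^{n−2}. That is, replacing two side-lengths by their average does not decrease the symplectic volume of the moduli space of spherical polygons. -/
/-!
Write `K = k + 1`. Since `sin² (K (a + b) / 2) - sin (K a) sin (K b) = (1 - cos (K (a - b))) / 2`,
the difference of the two sides is `(S 0 - S (a - b)) / 2`, where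
`S c = ∑ (∏ᵢ sin (K xᵢ)) cos (K c) / K ^ (n - 2)`. As `S` is even, it suffices that `S` is
antitone on `[0, π]`, which holds by induction on the number of factors. For two factors `S` is
an explicit piecewise quadratic in `c`, because `∑ cos (K t) / K² = t² / 4 - π t / 2 + π² / 6`
on `[0, 2π]`. Adding a factor `sin (K a)` turns `S` into `c ↦ ½ ∫_{c-a}^{c+a} S`, which decreases
on `[0, π]` because there `S (u + a) ≤ S (u - a)`, as `S` is even, `2π`-periodic and antitone on
`[0, π]`.
-/

open Real Finset

theorem Fin.card_filter_le_val (n m : ℕ) : #{i : Fin n | m ≤ (i : ℕ)} = n - m := by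
  have hlt := Fin.card_filter_val_lt (n := n) (m := m)
  have hsplit :=
    card_filter_add_card_filter_not (s := (univ : Finset (Fin n))) fun i => (i : ℕ) < m
  simp only [not_lt, card_univ, Fintype.card_fin] at hsplit
  omega

theorem Function.Even.apply_abs {α β : Type*} [AddGroup α] [LinearOrder α] {f : α → β}
    (hf : f.Even) (x : α) : f |x| = f x := by
  rcases abs_choice x with h | h <;> rw [h]
  exact hf x

theorem summable_one_div_succ_pow {p : ℕ} (hp : 2 ≤ p) :
    Summable fun k : ℕ => 1 / ((k : ℝ) + 1) ^ p := by
  simpa using (summable_nat_add_iff 1).mpr (summable_one_div_nat_pow.mpr hp)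

theorem abs_div_succ_pow_le {f : ℝ} (hf : |f| ≤ 1) (p k : ℕ) :
    |f / ((k : ℝ) + 1) ^ p| ≤ 1 / ((k : ℝ) + 1) ^ p := by
  rw [abs_div, abs_of_pos (by positivity : (0 : ℝ) < ((k : ℝ) + 1) ^ p)]
  gcongr

theorem summable_div_succ_pow {p : ℕ} (hp : 2 ≤ p) {f : ℕ → ℝ} (hf : ∀ k, |f k| ≤ 1) :
    Summable fun k : ℕ => f k / ((k : ℝ) + 1) ^ p :=
  .of_norm_bounded (summable_one_div_succ_pow hp) fun k => abs_div_succ_pow_le (hf k) p k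

theorem abs_mul_cos_le_one {v : ℝ} (hv : |v| ≤ 1) (t : ℝ) : |v * cos t| ≤ 1 := by
  rw [abs_mul]
  exact mul_le_one₀ hv (abs_nonneg _) (abs_cos_le_one t)

theorem abs_prod_sin_le_one {ι : Type*} (s : Finset ι) (f : ι → ℝ) :
    |∏ i ∈ s, sin (f i)| ≤ 1 := by
  rw [abs_prod]
  exact prod_le_one (fun _ _ => abs_nonneg _) fun _ _ => abs_sin_le_one _

theorem periodic_cos_succ_mul (k : ℕ) :
    Function.Periodic (fun t => cos (((k : ℝ) + 1) * t)) (2 * π) := fun t => by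
  simpa [mul_add] using cos_add_nat_mul_two_pi (((k : ℝ) + 1) * t) (k + 1)

noncomputable def cosSeries (p : ℕ) (w : ℕ → ℝ) (c : ℝ) : ℝ :=
  ∑' k : ℕ, w k * cos (((k : ℝ) + 1) * c) / ((k : ℝ) + 1) ^ p

section cosSeries

variable {p : ℕ} {w : ℕ → ℝ}

theorem summable_cosSeries (hp : 2 ≤ p) (hw : ∀ k, |w k| ≤ 1) (c : ℝ) :
    Summable fun k : ℕ => w k * cos (((k : ℝ) + 1) * c) / ((k : ℝ) + 1) ^ p :=
  summable_div_succ_pow hp fun k => abs_mul_cos_le_one (hw k) _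

theorem continuous_cosSeries (hp : 2 ≤ p) (hw : ∀ k, |w k| ≤ 1) :
    Continuous (cosSeries p w) :=
  continuous_tsum (fun k => by fun_prop) (summable_one_div_succ_pow hp)
    fun k _ => abs_div_succ_pow_le (abs_mul_cos_le_one (hw k) _) p k

theorem even_cosSeries : (cosSeries p w).Even := fun c => by
  simp only [cosSeries, mul_neg, cos_neg]

theorem periodic_cosSeries : (cosSeries p w).Periodic (2 * π) := fun c => by
  simp only [cosSeries, periodic_cos_succ_mul _ c]

theorem integral_cosSeries (hp : 2 ≤ p) (hw : ∀ k, |w k| ≤ 1) (a c : ℝ) :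
    ∫ t in (c - a)..(c + a), cosSeries p w t =
      2 * cosSeries (p + 1) (fun k => sin (((k : ℝ) + 1) * a) * w k) c := by
  let F : ℕ → C(ℝ, ℝ) := fun k =>
    ⟨fun t => w k * cos (((k : ℝ) + 1) * t) / ((k : ℝ) + 1) ^ p, by fun_prop⟩
  let I : TopologicalSpace.Compacts ℝ := ⟨Set.uIcc (c - a) (c + a), isCompact_uIcc⟩
  have hF : Summable fun k => ‖(F k).restrict I‖ :=
    .of_nonneg_of_le (fun _ => norm_nonneg _)
      (fun k => (ContinuousMap.norm_le _ (by positivity)).2 fun t =>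
        abs_div_succ_pow_le (abs_mul_cos_le_one (hw k) _) p k)
      (summable_one_div_succ_pow hp)
  have hterm (k : ℕ) : ∫ t in (c - a)..(c + a), F k t =
      2 * (sin (((k : ℝ) + 1) * a) * w k * cos (((k : ℝ) + 1) * c) / ((k : ℝ) + 1) ^ (p + 1)) := by
    have hK : ((k : ℝ) + 1) ≠ 0 := by positivity
    simp only [F, ContinuousMap.coe_mk, div_eq_mul_inv, mul_right_comm _ (cos _),
      intervalIntegral.integral_const_mul,
      intervalIntegral.integral_comp_mul_left (fun t => cos t) hK, integral_cos, smul_eq_mul,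
      mul_add, mul_sub, sin_add, sin_sub, pow_succ]
    field_simp
    ring
  rw [cosSeries, ← tsum_mul_left, ← tsum_congr hterm]
  exact (intervalIntegral.tsum_intervalIntegral_eq_of_summable_norm hF).symm

theorem cosSeries_cos_comm (d c : ℝ) :
    cosSeries p (fun k => cos (((k : ℝ) + 1) * d)) c =
      cosSeries p (fun k => cos (((k : ℝ) + 1) * c)) d := by
  simp only [cosSeries, mul_comm (cos (_ * d))]

theorem cosSeries_sin_mul_sin (hp : 2 ≤ p) (a b c : ℝ) :
    cosSeries p (fun k => sin (((k : ℝ) + 1) * a) * sin (((k : ℝ) + 1) * b)) c =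
      (cosSeries p (fun k => cos (((k : ℝ) + 1) * (a - b))) c -
        cosSeries p (fun k => cos (((k : ℝ) + 1) * (a + b))) c) / 2 := by
  rw [cosSeries, cosSeries, cosSeries,
    ← (summable_cosSeries hp (fun k => abs_cos_le_one _) c).tsum_sub
      (summable_cosSeries hp (fun k => abs_cos_le_one _) c), ← tsum_div_const]
  congr 1 with k
  rw [mul_sub, mul_add, cos_sub, cos_add]
  ring

end cosSeries

theorem hasSum_cos_div_sq {t : ℝ} (ht : t ∈ Set.Icc 0 (2 * π)) :
    HasSum (fun k : ℕ => cos (((k : ℝ) + 1) * t) / ((k : ℝ) + 1) ^ 2)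
      (t ^ 2 / 4 - π * t / 2 + π ^ 2 / 6) := by
  have hx : t / (2 * π) ∈ Set.Icc (0 : ℝ) 1 := by
    constructor
    · exact div_nonneg ht.1 (by positivity)
    · rw [div_le_one (by positivity)]; exact ht.2
  have h := (hasSum_nat_add_iff' 1).mpr (hasSum_one_div_nat_pow_mul_cos one_ne_zero hx)
  simp only [Nat.cast_add, Nat.cast_one, Finset.sum_range_one, Nat.cast_zero, mul_one] at h
  have hB : (Polynomial.map (algebraMap ℚ ℝ) (Polynomial.bernoulli 2)).eval (t / (2 * π)) =
      bernoulliFun 2 (t / (2 * π)) := rfl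
  have hterm (k : ℕ) : 1 / ((k : ℝ) + 1) ^ 2 * cos (2 * π * ((k : ℝ) + 1) * (t / (2 * π))) =
      cos (((k : ℝ) + 1) * t) / ((k : ℝ) + 1) ^ 2 := by
    field_simp
  have hvalue : (-1) ^ (1 + 1) * (2 * π) ^ (2 * 1) / 2 / ((2 * 1).factorial : ℝ) *
      bernoulliFun 2 (t / (2 * π)) - 1 / (0 : ℝ) ^ 2 * cos (2 * π * 0 * (t / (2 * π))) =
      t ^ 2 / 4 - π * t / 2 + π ^ 2 / 6 := by
    rw [bernoulliFun_two]
    norm_num [Nat.factorial]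
    field_simp
    ring
  rw [hB, hvalue] at h
  simpa only [hterm] using h

theorem cosSeries_cos_eq {d c : ℝ} (hd : d ∈ Set.Icc 0 π) (hc : c ∈ Set.Icc 0 π) :
    cosSeries 2 (fun k => cos (((k : ℝ) + 1) * d)) c =
      (d ^ 2 + c ^ 2) / 4 - π * max d c / 2 + π ^ 2 / 6 := by
  wlog hdc : d ≤ c generalizing d c
  · rw [cosSeries_cos_comm, this hc hd (by linarith), add_comm (d ^ 2), max_comm]
  have hplus := hasSum_cos_div_sq (t := c + d) ⟨by linarith [hc.1, hd.1], by linarith [hc.2, hd.2]⟩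
  have hminus := hasSum_cos_div_sq (t := c - d) ⟨by linarith, by linarith [hc.2, hd.1]⟩
  rw [max_eq_right hdc]
  convert ((hplus.add hminus).div_const 2).tsum_eq using 1
  · refine tsum_congr fun k => ?_
    rw [mul_add, mul_sub, cos_add, cos_sub]
    ring
  · ring

theorem antitone_max_sub_max {d₁ d₂ : ℝ} (h : d₁ ≤ d₂) :
    Antitone fun c => max d₂ c - max d₁ c := by
  intro c c' hcc'
  simp only [max_def]
  split_ifs <;> linarith

theorem antitoneOn_cosSeries_sin_mul_sin {a b : ℝ} (ha : a ∈ Set.Icc 0 π)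
    (hb : b ∈ Set.Icc 0 π) :
    AntitoneOn (cosSeries 2 fun k => sin (((k : ℝ) + 1) * a) * sin (((k : ℝ) + 1) * b))
      (Set.Icc 0 π) := by
  obtain ⟨ha₀, haπ⟩ := ha
  obtain ⟨hb₀, hbπ⟩ := hb
  set d₁ := |a - b| with hd₁_def
  -- `a + b` folded into `[0, π]` by `t ↦ 2π - t`, which `cos (K ·)` does not see
  set d₂ := π - |π - (a + b)| with hd₂_def
  have hd : 0 ≤ d₁ ∧ d₁ ≤ d₂ ∧ d₂ ≤ π := by
    rcases abs_cases (a - b) with ⟨h₁, _⟩ | ⟨h₁, _⟩ <;>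
      rcases abs_cases (π - (a + b)) with ⟨h₂, _⟩ | ⟨h₂, _⟩ <;>
      rw [hd₁_def, hd₂_def, h₁, h₂] <;> refine ⟨?_, ?_, ?_⟩ <;> linarith
  have hd₁ : d₁ ∈ Set.Icc 0 π := ⟨hd.1, hd.2.1.trans hd.2.2⟩
  have hd₂ : d₂ ∈ Set.Icc 0 π := ⟨hd.1.trans hd.2.1, hd.2.2⟩
  have hcos₁ (k : ℕ) : cos (((k : ℝ) + 1) * (a - b)) = cos (((k : ℝ) + 1) * d₁) := by
    rcases abs_cases (a - b) with ⟨h, -⟩ | ⟨h, -⟩ <;> simp only [d₁, h, mul_neg, cos_neg]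
  have hcos₂ (k : ℕ) : cos (((k : ℝ) + 1) * (a + b)) = cos (((k : ℝ) + 1) * d₂) := by
    rcases abs_cases (π - (a + b)) with ⟨h, -⟩ | ⟨h, -⟩
    · simp only [d₂, h, sub_sub_cancel]
    · rw [show d₂ = 2 * π - (a + b) by simp only [d₂, h]; ring, (periodic_cos_succ_mul k).sub_eq',
        mul_neg, cos_neg]
  intro c hc c' hc' hcc'
  simp only [cosSeries_sin_mul_sin le_rfl, hcos₁, hcos₂, cosSeries_cos_eq hd₁ hc,
    cosSeries_cos_eq hd₂ hc, cosSeries_cos_eq hd₁ hc', cosSeries_cos_eq hd₂ hc']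
  have := mul_le_mul_of_nonneg_left (antitone_max_sub_max hd.2.1 hcc') pi_pos.le
  nlinarith

section EvenPeriodic

variable {F : ℝ → ℝ}

theorem apply_add_le_apply_sub (heven : F.Even) (hper : F.Periodic (2 * π))
    (hanti : AntitoneOn F (Set.Icc 0 π)) {a u : ℝ} (ha : a ∈ Set.Icc 0 π)
    (hu : u ∈ Set.Icc 0 π) :
    F (u + a) ≤ F (u - a) := by
  obtain ⟨ha₀, haπ⟩ := ha
  obtain ⟨hu₀, huπ⟩ := hu
  have hbound := abs_le.2 (⟨by linarith, by linarith⟩ : -π ≤ u - a ∧ u - a ≤ π)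
  rw [← heven.apply_abs (u - a)]
  rcases le_total (u + a) π with h | h
  · exact hanti ⟨abs_nonneg _, hbound⟩ ⟨by linarith, h⟩
      (abs_le.2 ⟨by linarith, by linarith⟩)
  · rw [← heven (u + a), ← hper.sub_eq']
    exact hanti ⟨abs_nonneg _, hbound⟩ ⟨by linarith, by linarith⟩
      (abs_le.2 ⟨by linarith, by linarith⟩)

theorem antitoneOn_integral_sub_add (hcont : Continuous F) (heven : F.Even)
    (hper : F.Periodic (2 * π)) (hanti : AntitoneOn F (Set.Icc 0 π)) {a : ℝ}
    (ha : a ∈ Set.Icc 0 π) :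
    AntitoneOn (fun c => ∫ t in (c - a)..(c + a), F t) (Set.Icc 0 π) := by
  intro c hc c' hc' hcc'
  have hle : ∫ u in c..c', F (u + a) ≤ ∫ u in c..c', F (u - a) :=
    intervalIntegral.integral_mono_on hcc'
      ((hcont.comp (continuous_add_const a)).intervalIntegrable _ _)
      ((hcont.comp (continuous_sub_right a)).intervalIntegrable _ _) fun u hu =>
        apply_add_le_apply_sub heven hper hanti ha ⟨hc.1.trans hu.1, hu.2.trans hc'.2⟩
  rw [intervalIntegral.integral_comp_add_right, intervalIntegral.integral_comp_sub_right] at hle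
  have := intervalIntegral.integral_interval_sub_interval_comm'
    (hcont.intervalIntegrable (c' - a) (c' + a)) (hcont.intervalIntegrable (c - a) (c + a))
    (hcont.intervalIntegrable (μ := MeasureTheory.volume) _ _)
  linarith

end EvenPeriodic

theorem antitoneOn_cosSeries_prod_sin {ι : Type*} (r : ι → ℝ) (s : Finset ι) (hs : 2 ≤ #s)
    (hr : ∀ i ∈ s, r i ∈ Set.Icc 0 π) :
    AntitoneOn (cosSeries #s fun k => ∏ i ∈ s, sin (((k : ℝ) + 1) * r i)) (Set.Icc 0 π) := by
  induction s using Finset.cons_induction with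
  | empty => simp at hs
  | cons i s hi ih =>
    have hri := hr i (mem_cons_self i s)
    have hrs : ∀ j ∈ s, r j ∈ Set.Icc 0 π := fun j hj => hr j (mem_cons_of_mem hj)
    rw [card_cons] at hs ⊢
    simp only [prod_cons]
    rcases (by omega : #s = 1 ∨ 2 ≤ #s) with h | h
    · obtain ⟨j, rfl⟩ := card_eq_one.1 h
      simpa using antitoneOn_cosSeries_sin_mul_sin hri (hrs j (mem_singleton_self j))
    · have hw (k : ℕ) := abs_prod_sin_le_one s fun j => ((k : ℝ) + 1) * r j
      intro c hc c' hc' hcc'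
      have H := antitoneOn_integral_sub_add (continuous_cosSeries h hw) even_cosSeries
        periodic_cosSeries (ih h hrs) hri hc hc' hcc'
      simp only [integral_cosSeries h hw] at H
      linarith

theorem tsum_sin_mul_sin_le_tsum_sin_sq {p : ℕ} {w : ℕ → ℝ} (hp : 2 ≤ p)
    (hw : ∀ k, |w k| ≤ 1) (hanti : AntitoneOn (cosSeries p w) (Set.Icc 0 π)) {a b : ℝ}
    (hab : |a - b| ≤ π) :
    ∑' k : ℕ, sin (((k : ℝ) + 1) * a) * sin (((k : ℝ) + 1) * b) * w k / ((k : ℝ) + 1) ^ p ≤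
      ∑' k : ℕ, sin (((k : ℝ) + 1) * (a + b) / 2) ^ 2 * w k / ((k : ℝ) + 1) ^ p := by
  have hdiff : (∑' k : ℕ, sin (((k : ℝ) + 1) * (a + b) / 2) ^ 2 * w k / ((k : ℝ) + 1) ^ p) -
      ∑' k : ℕ, sin (((k : ℝ) + 1) * a) * sin (((k : ℝ) + 1) * b) * w k / ((k : ℝ) + 1) ^ p =
      (cosSeries p w 0 - cosSeries p w (a - b)) / 2 := by
    rw [cosSeries, cosSeries,
      ← (summable_cosSeries hp hw 0).tsum_sub (summable_cosSeries hp hw _), ← tsum_div_const,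
      ← Summable.tsum_sub]
    · refine tsum_congr fun k => ?_
      rw [sin_sq_eq_half_sub, mul_zero, cos_zero,
        show 2 * (((k : ℝ) + 1) * (a + b) / 2) = ((k : ℝ) + 1) * a + ((k : ℝ) + 1) * b by ring,
        mul_sub, cos_add, cos_sub]
      ring
    · exact summable_div_succ_pow hp fun k => by
        rw [abs_mul, abs_pow]
        exact mul_le_one₀ (pow_le_one₀ (abs_nonneg _) (abs_sin_le_one _)) (abs_nonneg _)
          (hw k)
    · exact summable_div_succ_pow hp fun k => by
        rw [abs_mul, abs_mul]
        exact mul_le_one₀ (mul_le_one₀ (abs_sin_le_one _) (abs_nonneg _) (abs_sin_le_one _))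
          (abs_nonneg _) (hw k)
  have hmono : cosSeries p w (a - b) ≤ cosSeries p w 0 := by
    rw [← even_cosSeries.apply_abs]
    exact hanti ⟨le_rfl, pi_pos.le⟩ ⟨abs_nonneg _, hab⟩ (abs_nonneg _)
  linarith

theorem averaging_step (n : ℕ) (hn : 4 ≤ n) (x : Fin n → ℝ)
    (hx : ∀ i, 0 < x i ∧ x i < π) :
    ∑' k : ℕ, Real.sin (((k : ℝ) + 1) * x ⟨0, by omega⟩) *
        Real.sin (((k : ℝ) + 1) * x ⟨1, by omega⟩) *
        (∏ i ∈ Finset.univ.filter (fun i : Fin n => 2 ≤ (i : ℕ)),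
          Real.sin (((k : ℝ) + 1) * x i)) / ((k : ℝ) + 1) ^ (n - 2) ≤
      ∑' k : ℕ, (Real.sin (((k : ℝ) + 1) * (x ⟨0, by omega⟩ + x ⟨1, by omega⟩) / 2)) ^ 2 *
        (∏ i ∈ Finset.univ.filter (fun i : Fin n => 2 ≤ (i : ℕ)),
          Real.sin (((k : ℝ) + 1) * x i)) / ((k : ℝ) + 1) ^ (n - 2) := by
  have hcard : #(univ.filter fun i : Fin n => 2 ≤ (i : ℕ)) = n - 2 := Fin.card_filter_le_val n 2
  have hanti := antitoneOn_cosSeries_prod_sin x (univ.filter fun i : Fin n => 2 ≤ (i : ℕ))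
    (by omega) fun i _ => ⟨(hx i).1.le, (hx i).2.le⟩
  rw [hcard] at hanti
  have hx₀ := hx ⟨0, by omega⟩
  have hx₁ := hx ⟨1, by omega⟩
  exact tsum_sin_mul_sin_le_tsum_sin_sq (by omega) (fun k => abs_prod_sin_le_one _ _) hanti
    (abs_le.2 ⟨by linarith, by linarith⟩)
end
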